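/- Let $W_g$ be the finite Weyl group of type $C_g$ inside the affine Weyl group of type $\tilde{C}_g$ with simple affine reflections $s_0, s_1, \dots, s_g$. For $0 \le c \le g/2$ let $W_{\{c,g-c\}}$ be the subgroup generated by all $s_i$ with $i \notin \{c, g-c\}$, and let $W_c \subset W_g$ be embedded via $s_{c+1-i} \mapsto s_{g+1-i}$. Then $W_{g,\mathrm{final}} \cap W_{\{c,g-c\}} = W_{c,\mathrm{final}}$, i.e., the final elements of $W_g$ lying in $W_{\{c,g-c\}}$ are exactly the images of the final elements of $W_c$. -/

import Mathlib

/-!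
STATEMENT 3: Inside the affine Weyl group `W_g^a` of type `C̃_g`, with simple affine
reflections `s_0, s_1, …, s_g` (indexed by `Fin (g+1)`, Coxeter matrix: `m(s_i,s_{i+1}) = 3`
for `1 ≤ i ≤ g-2`, `m(s_0,s_1) = m(s_{g-1},s_g) = 4`, and `m(s_i,s_j) = 2` for `|i-j| ≥ 2`),
the finite Weyl group `W_g` of type `C_g` is the subgroup generated by `s_1, …, s_g`.
For `0 ≤ c ≤ g/2`, let `W_{{c,g-c}}` be the subgroup generated by all `s_i` with
`i ∉ {c, g-c}`, and let `W_c ⊆ W_g` be embedded via `s_{c+1-i} ↦ s_{g+1-i}`, so that its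
image is the subgroup generated by `s_{g-c+1}, …, s_g`, and the image of the final elements
`W_{c,final}` is the set of minimal length representatives of the cosets of
`⟨s_{g-c+1}, …, s_{g-1}⟩` in that image.  Then
`W_{g,final} ∩ W_{{c,g-c}} = W_{c,final}` (as subsets of the affine Weyl group).
-/

open CoxeterSystem

variable {W : Type*} [Group W] {g : ℕ} {M : CoxeterMatrix (Fin (g + 1))}

/-- The subgroup generated by the simple reflections `s_i` with `i ∈ T`. -/
def genBy (cs : CoxeterSystem M W) (T : Set ℕ) : Subgroup W :=
  Subgroup.closure {x | ∃ i : Fin (g + 1), (i : ℕ) ∈ T ∧ x = cs.simple i}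

/-- The elements of the subgroup `K` of minimal length in their coset modulo the
subgroup `P ≤ K`; for `K` the image of `W_c` and `P` the image of `S_c`, this is the image
of the set of final elements of `W_c`. -/
def finalIn (cs : CoxeterSystem M W) (K P : Subgroup W) : Set W :=
  {w | w ∈ K ∧ ∀ v ∈ K, w⁻¹ * v ∈ P → cs.length w ≤ cs.length v}

/-!
A final element of `W_g` is one with no right descent among `s_1, …, s_{g-1}`, so everything
reduces to descents in standard parabolic subgroups `W_I`. By the exchange property the right
descents of an element of `W_I` lie in `I`; consequently `W_I ∩ W_{I'} = W_{I ∩ I'}`, and an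
element without descents in `I` has length additive on `w W_I`. A final element of `W_g` lying in
`W_{{c,g-c}}` therefore lies in `W_I` for `I = ([1, g-c-1] \ {c}) ∪ [g-c+1, g]`, whose two parts
commute; a nontrivial component in the first part would create a descent among
`s_1, …, s_{g-1}`, so the element lies in `W_{[g-c+1, g]}`, the image of `W_c`, and is final
there. The converse is the same additivity of length.

The exchange property comes from Tits' sign representation of `W` on `W × ZMod 2`; the simple
reflections are pairwise distinct because they act differently in the reflection representation
of the Cartan matrix of type `C̃_g`.
-/

namespace CoxeterSystem

variable {B : Type*} {W : Type*} [Group W] {M : CoxeterMatrix B} (cs : CoxeterSystem M W)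

local prefix:100 "s " => cs.simple
local prefix:100 "π " => cs.wordProd
local prefix:100 "ℓ " => cs.length
local prefix:100 "ris " => cs.rightInvSeq
local prefix:100 "lis " => cs.leftInvSeq

section Exchange

theorem alternatingWord_two_mul_add_two (i j : B) (p : ℕ) :
    alternatingWord i j (2 * p + 2) = i :: j :: alternatingWord i j (2 * p) := by
  rw [alternatingWord_succ', alternatingWord_succ']
  simp

theorem reverse_alternatingWord_two_mul (i j : B) (p : ℕ) :
    (alternatingWord i j (2 * p)).reverse = alternatingWord j i (2 * p) := by
  induction p with
  | zero => rfl
  | succ p ih =>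
    rw [Nat.mul_succ, alternatingWord_two_mul_add_two, List.reverse_cons, List.reverse_cons, ih]
    simp [alternatingWord_succ]

theorem prod_map_alternatingWord_two_mul {G : Type*} [Monoid G] (f : B → G) (i j : B) (p : ℕ) :
    ((alternatingWord i j (2 * p)).map f).prod = (f i * f j) ^ p := by
  induction p with
  | zero => simp [alternatingWord]
  | succ p ih =>
    rw [Nat.mul_succ, alternatingWord_two_mul_add_two, pow_succ', ← ih]
    simp [mul_assoc]

theorem count_leftInvSeq_braid_even [DecidableEq W] (i j : B) (t : W) :
    Even ((lis (alternatingWord i j (2 * M i j))).count t) := by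
  set L := lis (alternatingWord i j (2 * M i j))
  have hL : L.length = 2 * M i j := by simp [L]
  -- the `k`-th entry is `π (alternatingWord j i (2 * k + 1))`, which has period `M i j` in `k`
  have hperiod : L.drop (M i j) = L.take (M i j) := by
    apply List.ext_getElem (by simp [hL]; omega)
    intro k h₁ h₂
    simp only [List.length_drop, hL] at h₁
    simp only [List.getElem_drop, List.getElem_take, L]
    rw [getElem_leftInvSeq_alternatingWord _ _ _ _ _ (by omega),
      getElem_leftInvSeq_alternatingWord _ _ _ _ _ (by omega),
      prod_alternatingWord_eq_mul_pow, prod_alternatingWord_eq_mul_pow]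
    have h₁ : (2 * (M i j + k) + 1) / 2 = k + M i j := by omega
    have h₂ : (2 * k + 1) / 2 = k := by omega
    rw [h₁, h₂, pow_add, cs.simple_mul_simple_pow', mul_one]
    simp
  rw [← List.take_append_drop (M i j) L, List.count_append, hperiod]
  exact ⟨_, rfl⟩

theorem count_rightInvSeq_braid_even [DecidableEq W] (i j : B) (t : W) :
    Even ((ris (alternatingWord i j (2 * M i j))).count t) := by
  rw [← reverse_alternatingWord_two_mul, rightInvSeq_reverse, List.count_reverse, M.symmetric]
  exact cs.count_leftInvSeq_braid_even j i t

theorem simple_mul_mul_simple_eq_simple_iff (i : B) (t : W) : s i * t * s i = s i ↔ t = s i := by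
  constructor
  · intro h
    simpa [mul_assoc] using congrArg (fun x => s i * x * s i) h
  · rintro rfl
    simp

/-- The permutation of Tits' proof of the exchange property. -/
def signPerm [DecidableEq W] (i : B) : Equiv.Perm (W × ZMod 2) :=
  Function.Involutive.toPerm (fun x => (s i * x.1 * s i, x.2 + if x.1 = s i then 1 else 0))
    (by
      rintro ⟨t, e⟩
      ext
      · simp [mul_assoc]
      · simp only [simple_mul_mul_simple_eq_simple_iff, add_assoc]
        split_ifs <;> decide +revert)

theorem signPerm_apply [DecidableEq W] (i : B) (t : W) (e : ZMod 2) :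
    cs.signPerm i (t, e) = (s i * t * s i, e + if t = s i then 1 else 0) :=
  rfl

theorem prod_map_signPerm_apply [DecidableEq W] (ω : List B) (t : W) (e : ZMod 2) :
    (ω.map cs.signPerm).prod (t, e) = (π ω * t * (π ω)⁻¹, e + (ris ω).count t) := by
  induction ω generalizing e with
  | nil => simp
  | cons i ω ih =>
    have hcond : π ω * t * (π ω)⁻¹ = s i ↔ (π ω)⁻¹ * s i * π ω = t := by
      constructor <;> intro h <;> rw [← h] <;> group
    simp only [List.map_cons, List.prod_cons, Equiv.Perm.mul_apply, ih, signPerm_apply,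
      rightInvSeq, List.count_cons, wordProd_cons, mul_inv_rev, inv_simple, beq_iff_eq,
      if_congr hcond rfl rfl, Prod.mk.injEq]
    constructor
    · group
    · push_cast
      ring

theorem isLiftable_signPerm [DecidableEq W] : M.IsLiftable cs.signPerm := by
  intro i j
  rw [← prod_map_alternatingWord_two_mul]
  ext ⟨t, e⟩ <;> simp only [prod_map_signPerm_apply, Equiv.Perm.one_apply]
  · rw [prod_alternatingWord_eq_mul_pow]
    simp
  · rw [(cs.count_rightInvSeq_braid_even i j t).natCast_zmod_two, add_zero]

theorem lift_wordProd {G : Type*} [Monoid G] {f : B → G} (hf : M.IsLiftable f) (ω : List B) :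
    cs.lift ⟨f, hf⟩ (π ω) = (ω.map f).prod := by
  induction ω with
  | nil => simp
  | cons i ω ih => simp [wordProd_cons, ih]

theorem cast_count_rightInvSeq_eq_of_wordProd_eq [DecidableEq W] {ω ω' : List B}
    (h : π ω = π ω') (t : W) :
    ((ris ω).count t : ZMod 2) = (ris ω').count t := by
  have := congrArg (fun w => (cs.lift ⟨_, cs.isLiftable_signPerm⟩ w (t, 0)).2) h
  simpa [lift_wordProd, prod_map_signPerm_apply] using this

theorem exchange {ω : List B} {i : B} (hi : cs.IsRightDescent (π ω) i) :
    ∃ k < ω.length, π ω * s i = π (ω.eraseIdx k) := by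
  classical
  obtain ⟨τ, hτ, hτω⟩ := cs.exists_isReduced (π ω * s i)
  have hτi : π (τ ++ [i]) = π ω := by
    rw [wordProd_append, wordProd_singleton, ← hτω, simple_mul_simple_cancel_right]
  have hτi_reduced : cs.IsReduced (τ ++ [i]) := by
    have := cs.isRightDescent_iff.mp hi
    rw [IsReduced, hτi, List.length_append, List.length_singleton, ← hτ.eq, ← hτω]
    omega
  have hcount : (ris (τ ++ [i])).count (s i) = 1 :=
    List.count_eq_one_of_mem hτi_reduced.nodup_rightInvSeq
      (by rw [← List.concat_eq_append, rightInvSeq_concat, List.concat_eq_append]; simp)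
  -- `s i` occurs once in the inversion sequence of the reduced word `τ ++ [i]`, hence an odd
  -- number of times in that of `ω`, which has the same product
  have hmem : s i ∈ ris ω := by
    have := cs.cast_count_rightInvSeq_eq_of_wordProd_eq hτi (s i)
    rw [hcount] at this
    by_contra h
    simp [List.count_eq_zero_of_not_mem h] at this
  obtain ⟨k, hk, hk_eq⟩ := List.getElem_of_mem hmem
  rw [length_rightInvSeq] at hk
  refine ⟨k, hk, ?_⟩
  rw [← cs.wordProd_mul_getD_rightInvSeq, List.getD_eq_getElem _ _ (by simpa using hk), hk_eq]

end Exchange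

section Parabolic

def parabolic (J : Set B) : Subgroup W := Subgroup.closure (cs.simple '' J)

variable {cs} {J J₁ J₂ : Set B} {w : W} {i : B}

theorem simple_mem_parabolic (hi : i ∈ J) : s i ∈ cs.parabolic J :=
  Subgroup.subset_closure (Set.mem_image_of_mem _ hi)

theorem parabolic_mono (h : J₁ ⊆ J₂) : cs.parabolic J₁ ≤ cs.parabolic J₂ :=
  Subgroup.closure_mono (Set.image_mono h)

theorem wordProd_mem_parabolic {ω : List B} (hω : ∀ i ∈ ω, i ∈ J) :
    π ω ∈ cs.parabolic J := by
  induction ω with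
  | nil => exact one_mem _
  | cons i ω ih =>
    rw [wordProd_cons]
    exact mul_mem (simple_mem_parabolic (hω i List.mem_cons_self))
      (ih fun j hj => hω j (List.mem_cons_of_mem i hj))

theorem IsReduced.exists_sublist_mul_simple {ω : List B} (hω : cs.IsReduced ω) (j : B) :
    ∃ ω' : List B, cs.IsReduced ω' ∧ ω'.Sublist (ω ++ [j]) ∧ π ω * s j = π ω' := by
  by_cases hj : cs.IsRightDescent (π ω) j
  · obtain ⟨k, hk, hk_eq⟩ := cs.exchange hj
    refine ⟨ω.eraseIdx k, ?_, (List.eraseIdx_sublist ω k).trans (List.sublist_append_left _ _),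
      hk_eq⟩
    have := cs.isRightDescent_iff.mp hj
    have := List.length_eraseIdx_add_one hk
    have := hω.eq
    rw [IsReduced, ← hk_eq]
    omega
  · refine ⟨ω ++ [j], ?_, List.Sublist.refl _, by simp [wordProd_append]⟩
    rw [IsReduced, wordProd_append, wordProd_singleton, cs.not_isRightDescent_iff.mp hj, hω.eq,
      List.length_append, List.length_singleton]

theorem exists_isReduced_of_mem_parabolic (hw : w ∈ cs.parabolic J) :
    ∃ ω : List B, cs.IsReduced ω ∧ (∀ i ∈ ω, i ∈ J) ∧ w = π ω := by
  have step : ∀ (ω : List B), cs.IsReduced ω → (∀ i ∈ ω, i ∈ J) → ∀ j ∈ J,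
      ∃ ω' : List B, cs.IsReduced ω' ∧ (∀ i ∈ ω', i ∈ J) ∧ π ω * s j = π ω' := by
    intro ω hω hωJ j hj
    obtain ⟨ω', hω', hsub, heq⟩ := hω.exists_sublist_mul_simple j
    refine ⟨ω', hω', fun i hi => ?_, heq⟩
    rcases List.mem_append.mp (hsub.subset hi) with hi | hi
    · exact hωJ i hi
    · exact List.mem_singleton.mp hi ▸ hj
  induction hw using Subgroup.closure_induction_right with
  | one => exact ⟨[], by simp [IsReduced], by simp, rfl⟩
  | mul_right x _ y hy ih =>
    obtain ⟨ω, hω, hωJ, rfl⟩ := ih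
    obtain ⟨j, hj, rfl⟩ := hy
    exact step ω hω hωJ j hj
  | mul_inv_cancel x _ y hy ih =>
    obtain ⟨ω, hω, hωJ, rfl⟩ := ih
    obtain ⟨j, hj, rfl⟩ := hy
    rw [inv_simple]
    exact step ω hω hωJ j hj

theorem exists_isRightDescent_of_mem_parabolic (hw : w ∈ cs.parabolic J) (hw₁ : w ≠ 1) :
    ∃ i ∈ J, cs.IsRightDescent w i := by
  obtain ⟨ω, hω, hωJ, rfl⟩ := exists_isReduced_of_mem_parabolic hw
  obtain rfl | ⟨ω', j, rfl⟩ := List.eq_nil_or_concat ω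
  · exact absurd rfl hw₁
  refine ⟨j, hωJ j (by simp), ?_⟩
  have := cs.length_wordProd_le ω'
  rw [IsRightDescent, hω.eq, List.concat_eq_append, wordProd_append, wordProd_singleton,
    simple_mul_simple_cancel_right]
  simp only [List.length_append, List.length_singleton]
  omega

section Injective

variable (hinj : Function.Injective cs.simple)
include hinj

theorem mem_of_simple_mem_parabolic (h : s i ∈ cs.parabolic J) : i ∈ J := by
  obtain ⟨ω, hω, hωJ, hi⟩ := exists_isReduced_of_mem_parabolic h
  have hlen : ω.length = 1 := by rw [← hω.eq, ← hi, length_simple]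
  obtain ⟨j, rfl⟩ := List.length_eq_one_iff.mp hlen
  rw [wordProd_singleton] at hi
  exact hinj hi ▸ hωJ j (List.mem_singleton_self j)

theorem mem_of_isRightDescent (hw : w ∈ cs.parabolic J) (hi : cs.IsRightDescent w i) :
    i ∈ J := by
  obtain ⟨ω, -, hωJ, rfl⟩ := exists_isReduced_of_mem_parabolic hw
  obtain ⟨k, -, hk⟩ := cs.exchange hi
  apply mem_of_simple_mem_parabolic hinj
  have hsi : s i = (π ω)⁻¹ * π (ω.eraseIdx k) := by rw [← hk, inv_mul_cancel_left]
  rw [hsi]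
  exact mul_mem (inv_mem hw)
    (wordProd_mem_parabolic fun j hj => hωJ j (List.mem_of_mem_eraseIdx hj))

theorem mem_parabolic_inter (h₁ : w ∈ cs.parabolic J₁) (h₂ : w ∈ cs.parabolic J₂) :
    w ∈ cs.parabolic (J₁ ∩ J₂) := by
  induction hn : ℓ w using Nat.strong_induction_on generalizing w with
  | _ n ih =>
    by_cases hw₁ : w = 1
    · exact hw₁ ▸ one_mem _
    obtain ⟨i, hi₁, hi⟩ := exists_isRightDescent_of_mem_parabolic h₁ hw₁
    have hi₂ := mem_of_isRightDescent hinj h₂ hi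
    have hlt : ℓ (w * s i) < n := hn ▸ hi
    have hmem := ih _ hlt (mul_mem h₁ (simple_mem_parabolic hi₁))
      (mul_mem h₂ (simple_mem_parabolic hi₂)) rfl
    simpa using mul_mem hmem (simple_mem_parabolic ⟨hi₁, hi₂⟩)

end Injective

end Parabolic

section CosetLength

variable {cs} {J : Set B} {w u : W}

theorem not_isRightDescent_mul_of_forall_le (hmin : ∀ v ∈ cs.parabolic J, ℓ w ≤ ℓ (w * v))
    (hu : u ∈ cs.parabolic J) (hadd : ℓ (w * u) = ℓ w + ℓ u) {j : B} (hj : j ∈ J)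
    (hnd : ¬ cs.IsRightDescent u j) : ¬ cs.IsRightDescent (w * u) j := by
  intro hdesc
  obtain ⟨ρ, hρ, rfl⟩ := cs.exists_isReduced w
  obtain ⟨σ, hσ, rfl⟩ := cs.exists_isReduced u
  rw [← wordProd_append] at hdesc
  obtain ⟨k, hk, hk_eq⟩ := cs.exchange hdesc
  rcases lt_or_ge k ρ.length with hkρ | hkρ
  · -- the deleted letter lies in `ρ`: then `w` is not minimal in `w W_J`
    rw [List.eraseIdx_append_of_lt_length hkρ, wordProd_append, wordProd_append] at hk_eq
    have hconj : π σ * s j * (π σ)⁻¹ ∈ cs.parabolic J :=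
      mul_mem (mul_mem hu (simple_mem_parabolic hj)) (inv_mem hu)
    have hshort : π ρ * (π σ * s j * (π σ)⁻¹) = π (ρ.eraseIdx k) := by
      rw [← mul_assoc, ← mul_assoc, hk_eq, mul_inv_cancel_right]
    have := hshort ▸ hmin _ hconj
    have := cs.length_wordProd_le (ρ.eraseIdx k)
    have := List.length_eraseIdx_add_one hkρ
    have := hρ.eq
    omega
  · -- the deleted letter lies in `σ`: then `j` is a descent of `u`
    rw [List.eraseIdx_append_of_length_le hkρ, wordProd_append, wordProd_append, mul_assoc,
      mul_right_inj] at hk_eq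
    have := cs.length_wordProd_le (σ.eraseIdx (k - ρ.length))
    have := List.length_eraseIdx_add_one (l := σ) (i := k - ρ.length)
      (by simp at hk; omega)
    have := hσ.eq
    exact hnd (by rw [IsRightDescent, hk_eq]; omega)

theorem length_mul_eq_add_of_forall_le (hmin : ∀ v ∈ cs.parabolic J, ℓ w ≤ ℓ (w * v))
    (hu : u ∈ cs.parabolic J) : ℓ (w * u) = ℓ w + ℓ u := by
  have step : ∀ x ∈ cs.parabolic J, ℓ (w * x) = ℓ w + ℓ x → ∀ j ∈ J,
      ℓ (w * (x * s j)) = ℓ w + ℓ (x * s j) := by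
    intro x hx hadd j hj
    rw [← mul_assoc]
    by_cases hdesc : cs.IsRightDescent x j
    · have := cs.isRightDescent_iff.mp hdesc
      have := cs.length_mul_simple (w * x) j
      have := cs.length_mul_le w (x * s j)
      rw [← mul_assoc] at this
      omega
    · rw [cs.not_isRightDescent_iff.mp hdesc, cs.not_isRightDescent_iff.mp
        (not_isRightDescent_mul_of_forall_le hmin hx hadd hj hdesc), hadd, add_assoc]
  induction hu using Subgroup.closure_induction_right with
  | one => simp
  | mul_right x hx y hy ih =>
    obtain ⟨j, hj, rfl⟩ := hy
    exact step x hx ih j hj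
  | mul_inv_cancel x hx y hy ih =>
    obtain ⟨j, hj, rfl⟩ := hy
    rw [inv_simple]
    exact step x hx ih j hj

theorem length_mul_eq_add_of_forall_not_isRightDescent
    (hnd : ∀ i ∈ J, ¬ cs.IsRightDescent w i) (hu : u ∈ cs.parabolic J) :
    ℓ (w * u) = ℓ w + ℓ u := by
  -- `w` is the shortest element `w₀` of `w W_J`: a descent of `w₀⁻¹ * w ∈ W_J` is one
  -- of `w`
  obtain ⟨w₀, hw₀ : w⁻¹ * w₀ ∈ cs.parabolic J, hmin⟩ :=
    (measure cs.length).wf.has_min {v | w⁻¹ * v ∈ cs.parabolic J} ⟨w, by simp⟩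
  have hw₀min : ∀ v ∈ cs.parabolic J, ℓ w₀ ≤ ℓ (w₀ * v) := fun v hv =>
    not_lt.mp (hmin _ (by simpa [← mul_assoc] using mul_mem hw₀ hv))
  have hx : w₀⁻¹ * w ∈ cs.parabolic J := by simpa using inv_mem hw₀
  suffices hw : w₀⁻¹ * w = 1 by
    obtain rfl : w = w₀ := (inv_mul_eq_one.mp hw).symm
    exact length_mul_eq_add_of_forall_le hw₀min hu
  by_contra hne
  obtain ⟨i, hi, hdesc⟩ := exists_isRightDescent_of_mem_parabolic hx hne
  have h₁ := length_mul_eq_add_of_forall_le hw₀min hx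
  have h₂ := length_mul_eq_add_of_forall_le hw₀min (mul_mem hx (simple_mem_parabolic hi))
  rw [mul_inv_cancel_left] at h₁
  rw [← mul_assoc, mul_inv_cancel_left] at h₂
  exact hnd i hi (by rw [IsRightDescent, h₁, h₂]; exact Nat.add_lt_add_left hdesc _)

theorem forall_le_length_mul_iff :
    (∀ u ∈ cs.parabolic J, ℓ w ≤ ℓ (w * u)) ↔ ∀ i ∈ J, ¬ cs.IsRightDescent w i :=
  ⟨fun h _ hi => not_lt.mpr (h _ (simple_mem_parabolic hi)), fun h _ hu =>
    (length_mul_eq_add_of_forall_not_isRightDescent h hu).symm ▸ Nat.le_add_right _ _⟩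

end CosetLength

section Commuting

theorem commute_simple_of_eq_two {i j : B} (h : M i j = 2) : Commute (s i) (s j) := by
  have := cs.simple_mul_simple_pow i j
  rw [h, pow_two, mul_eq_one_iff_eq_inv, mul_inv_rev, inv_simple, inv_simple] at this
  exact this

variable {cs} {J₁ J₂ : Set B} {w : W}

theorem parabolic_union :
    cs.parabolic (J₁ ∪ J₂) = cs.parabolic J₁ ⊔ cs.parabolic J₂ := by
  rw [parabolic, Set.image_union, Subgroup.closure_union, parabolic, parabolic]

theorem parabolic_le_centralizer (hcomm : ∀ i ∈ J₁, ∀ j ∈ J₂, Commute (s i) (s j)) :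
    cs.parabolic J₁ ≤ Subgroup.centralizer (cs.parabolic J₂) := by
  rw [parabolic, Subgroup.closure_le, parabolic, Subgroup.centralizer_closure]
  rintro _ ⟨i, hi, rfl⟩ _ ⟨j, hj, rfl⟩
  exact (hcomm i hi j hj).eq.symm

theorem mem_parabolic_of_forall_not_isRightDescent (hinj : Function.Injective cs.simple)
    (hcomm : ∀ i ∈ J₁, ∀ j ∈ J₂, Commute (s i) (s j)) (hdisj : Disjoint J₁ J₂)
    (hw : w ∈ cs.parabolic (J₁ ∪ J₂)) (hnd : ∀ i ∈ J₁, ¬ cs.IsRightDescent w i) :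
    w ∈ cs.parabolic J₂ := by
  have hcent := parabolic_le_centralizer hcomm
  rw [parabolic_union, ← SetLike.mem_coe, Subgroup.coe_mul_of_left_le_normalizer_right _ _
    (hcent.trans (Subgroup.centralizer_le_normalizer _))] at hw
  obtain ⟨x, hx, y, hy, rfl : x * y = w⟩ := hw
  have hxy : x * y = y * x := (hcent hx y hy).symm
  have hy_nd : ∀ i ∈ J₁, ¬ cs.IsRightDescent y i := fun i hi hdesc =>
    Set.disjoint_left.mp hdisj hi (mem_of_isRightDescent hinj hy hdesc)
  suffices hx₁ : x = 1 by simpa [hx₁] using hy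
  by_contra hx₁
  obtain ⟨i, hi, hdesc⟩ := exists_isRightDescent_of_mem_parabolic hx hx₁
  have h₁ := length_mul_eq_add_of_forall_not_isRightDescent hy_nd hx
  have h₂ := length_mul_eq_add_of_forall_not_isRightDescent hy_nd
    (mul_mem hx (simple_mem_parabolic hi))
  refine hnd i hi ?_
  rw [IsRightDescent, hxy, mul_assoc, h₁, h₂]
  exact Nat.add_lt_add_left hdesc _

end Commuting

end CoxeterSystem

section CartanRepresentation

open Matrix

variable {B : Type*} [Fintype B] [DecidableEq B] (A : Matrix B B ℤ)

def cartanReflection (i : B) : Module.End ℤ (B → ℤ) where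
  toFun v := v - Pi.single i ((A *ᵥ v) i)
  map_add' v w := by
    simp only [mulVec_add, Pi.add_apply, Pi.single_add]
    abel
  map_smul' c v := by
    simp only [mulVec_smul, Pi.smul_apply, smul_eq_mul, RingHom.id_apply, smul_sub]
    rw [← Pi.single_smul', smul_eq_mul]

variable {A}

theorem cartanReflection_apply (i : B) (v : B → ℤ) :
    cartanReflection A i v = v - Pi.single i ((A *ᵥ v) i) := rfl

variable {i j : B}

theorem cartanReflection_apply_add_single_add_single (hii : A i i = 2) (hij : i ≠ j)
    (v : B → ℤ) (x y : ℤ) :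
    cartanReflection A i (v + Pi.single i x + Pi.single j y) =
      v + Pi.single i (-x - A i j * y - (A *ᵥ v) i) + Pi.single j y := by
  ext k
  simp only [cartanReflection_apply, mulVec_add, mulVec_single, Pi.add_apply, Pi.sub_apply]
  rcases eq_or_ne k i with rfl | hki
  · simp only [Pi.single_eq_same, ne_eq, hij, not_false_eq_true, Pi.single_eq_of_ne, add_zero,
      Pi.smul_apply, col_apply, hii, MulOpposite.smul_eq_mul_unop, MulOpposite.unop_op]
    ring
  · rcases eq_or_ne k j with rfl | hkj
    · simp [hki]
    · simp [hki, hkj]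

theorem cartanReflection_apply_add_single_add_single' (hjj : A j j = 2) (hij : i ≠ j)
    (v : B → ℤ) (x y : ℤ) :
    cartanReflection A j (v + Pi.single i x + Pi.single j y) =
      v + Pi.single i x + Pi.single j (-y - A j i * x - (A *ᵥ v) j) := by
  rw [add_right_comm, cartanReflection_apply_add_single_add_single hjj hij.symm, add_right_comm]

theorem cartanReflection_mul_pow_eq_one (hii : A i i = 2) (hjj : A j j = 2) (hij : i ≠ j)
    {m : ℕ} (h : (A i j = 0 ∧ A j i = 0 ∧ m = 2) ∨ (A i j = -1 ∧ A j i = -1 ∧ m = 3) ∨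
      (A i j = -1 ∧ A j i = -2 ∧ m = 4) ∨ (A i j = -2 ∧ A j i = -1 ∧ m = 4)) :
    (cartanReflection A i * cartanReflection A j) ^ m = 1 := by
  -- both reflections only move the coordinates `i` and `j`: a rank-two computation
  refine LinearMap.ext fun v => ?_
  have hv : v = v + Pi.single i 0 + Pi.single j 0 := by simp
  have hv' : ∀ x y : ℤ, x = 0 → y = 0 → v + Pi.single i x + Pi.single j y = v := by
    rintro x y rfl rfl
    exact hv.symm
  rw [Module.End.one_apply]
  rcases h with ⟨ha, hb, rfl⟩ | ⟨ha, hb, rfl⟩ | ⟨ha, hb, rfl⟩ | ⟨ha, hb, rfl⟩ <;>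
  · conv_lhs => rw [hv]
    simp only [pow_succ, pow_zero, one_mul, Module.End.mul_apply,
      cartanReflection_apply_add_single_add_single hii hij,
      cartanReflection_apply_add_single_add_single' hjj hij, ha, hb]
    apply hv' <;> ring

theorem cartanReflection_mul_self (hii : A i i = 2) :
    cartanReflection A i * cartanReflection A i = 1 := by
  refine LinearMap.ext fun v => ?_
  have h : (A *ᵥ cartanReflection A i v) i = -(A *ᵥ v) i := by
    simp only [cartanReflection_apply, mulVec_sub, mulVec_single, op_smul_eq_smul, zsmul_eq_mul,
      Pi.sub_apply, Pi.mul_apply, Pi.intCast_apply, Int.cast_eq, col_apply, hii]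
    ring
  rw [Module.End.mul_apply, cartanReflection_apply _ (cartanReflection A i v), h,
    cartanReflection_apply, Pi.single_neg, sub_neg_eq_add, sub_add_cancel, Module.End.one_apply]

theorem isLiftable_cartanReflection {M : CoxeterMatrix B} (hdiag : ∀ i, A i i = 2)
    (hoff : ∀ i j, i ≠ j → (A i j = 0 ∧ A j i = 0 ∧ M i j = 2) ∨
      (A i j = -1 ∧ A j i = -1 ∧ M i j = 3) ∨ (A i j = -1 ∧ A j i = -2 ∧ M i j = 4) ∨
      (A i j = -2 ∧ A j i = -1 ∧ M i j = 4)) :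
    M.IsLiftable (cartanReflection A) := by
  intro i j
  rcases eq_or_ne i j with rfl | hij
  · rw [M.diagonal, pow_one, cartanReflection_mul_self (hdiag i)]
  · exact cartanReflection_mul_pow_eq_one (hdiag i) (hdiag j) hij (hoff i j hij)

theorem CoxeterSystem.injective_simple_of_isLiftable_cartanReflection {W : Type*} [Group W]
    {M : CoxeterMatrix B} (cs : CoxeterSystem M W) (hdiag : ∀ i, A i i = 2)
    (hA : M.IsLiftable (cartanReflection A)) : Function.Injective cs.simple := by
  intro i j h
  by_contra hij
  have := congrArg (fun w => cs.lift ⟨_, hA⟩ w (Pi.single i 1) i) h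
  simp [cartanReflection_apply, mulVec_single, hdiag, hij] at this

end CartanRepresentation

def CoxeterMatrix.IsAffineTypeC {g : ℕ} (M : CoxeterMatrix (Fin (g + 1))) : Prop :=
  ∀ i j : Fin (g + 1), M.M i j =
    if i = j then 1
    else if (i : ℕ) + 1 = (j : ℕ) ∨ (j : ℕ) + 1 = (i : ℕ) then
      (if min (i : ℕ) (j : ℕ) = 0 ∨ max (i : ℕ) (j : ℕ) = g then 4 else 3)
    else 2

def affineCartanMatrixC (g : ℕ) : Matrix (Fin (g + 1)) (Fin (g + 1)) ℤ := fun i j =>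
  if i = j then 2
  else if (i : ℕ) + 1 = j ∨ (j : ℕ) + 1 = i then
    (if ((i : ℕ) = 1 ∧ (j : ℕ) = 0) ∨ ((i : ℕ) = g - 1 ∧ (j : ℕ) = g) then -2 else -1)
  else 0

theorem isLiftable_cartanReflection_affineCartanMatrixC (hg : 2 ≤ g) (hM : M.IsAffineTypeC) :
    M.IsLiftable (cartanReflection (affineCartanMatrixC g)) := by
  refine isLiftable_cartanReflection (fun i => by simp [affineCartanMatrixC]) fun i j hij => ?_
  have hij' : (i : ℕ) ≠ j := Fin.val_ne_of_ne hij
  have hi := i.isLt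
  have hj := j.isLt
  simp only [affineCartanMatrixC, hM i j, if_neg hij, if_neg hij.symm]
  split_ifs <;> omega

theorem CoxeterSystem.injective_simple_of_isAffineTypeC (hg : 2 ≤ g) (hM : M.IsAffineTypeC)
    (cs : CoxeterSystem M W) : Function.Injective cs.simple :=
  cs.injective_simple_of_isLiftable_cartanReflection (fun i => by simp [affineCartanMatrixC])
    (isLiftable_cartanReflection_affineCartanMatrixC hg hM)

theorem CoxeterSystem.commute_simple_of_isAffineTypeC (hM : M.IsAffineTypeC)
    (cs : CoxeterSystem M W) {i j : Fin (g + 1)} (hij : (i : ℕ) + 2 ≤ j) :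
    Commute (cs.simple i) (cs.simple j) := by
  refine cs.commute_simple_of_eq_two ?_
  rw [hM i j, if_neg (Fin.ne_of_val_ne (by omega)), if_neg (by omega)]

theorem genBy_eq_parabolic (cs : CoxeterSystem M W) (T : Set ℕ) :
    genBy cs T = cs.parabolic {i | (i : ℕ) ∈ T} := by
  rw [genBy, parabolic]
  congr 1
  ext x
  simp [eq_comm]

section FinalElements

variable {cs : CoxeterSystem M W} {K P Q A C P' : Set (Fin (g + 1))}

theorem mem_finalIn_parabolic_iff (hPK : P ⊆ K) {w : W} :
    w ∈ finalIn cs (cs.parabolic K) (cs.parabolic P) ↔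
      w ∈ cs.parabolic K ∧ ∀ i ∈ P, ¬ cs.IsRightDescent w i := by
  rw [← forall_le_length_mul_iff]
  refine and_congr_right fun hw => ⟨fun hmin u hu => ?_, fun hmin v _ hv => ?_⟩
  · exact hmin _ (mul_mem hw (parabolic_mono hPK hu)) (by simpa using hu)
  · simpa using hmin _ hv

theorem finalIn_inter_parabolic_eq_finalIn (hinj : Function.Injective cs.simple)
    (hPK : P ⊆ K) (hKQ : K ∩ Q ⊆ A ∪ C) (hAP : A ⊆ P) (hC : C ⊆ K ∩ Q)
    (hP' : P ∩ C = P')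
    (hcomm : ∀ i ∈ A, ∀ j ∈ C, Commute (cs.simple i) (cs.simple j)) (hdisj : Disjoint A C) :
    finalIn cs (cs.parabolic K) (cs.parabolic P) ∩ (cs.parabolic Q : Set W) =
      finalIn cs (cs.parabolic C) (cs.parabolic P') := by
  subst hP'
  ext w
  rw [Set.mem_inter_iff, SetLike.mem_coe, mem_finalIn_parabolic_iff hPK,
    mem_finalIn_parabolic_iff Set.inter_subset_right]
  constructor
  · rintro ⟨⟨hwK, hnd⟩, hwQ⟩
    have hw := parabolic_mono hKQ (mem_parabolic_inter hinj hwK hwQ)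
    exact ⟨mem_parabolic_of_forall_not_isRightDescent hinj hcomm hdisj hw
      fun i hi => hnd i (hAP hi), fun i hi => hnd i hi.1⟩
  · rintro ⟨hwC, hnd⟩
    refine ⟨⟨parabolic_mono (hC.trans Set.inter_subset_left) hwC, fun i hi hdesc => ?_⟩,
      parabolic_mono (hC.trans Set.inter_subset_right) hwC⟩
    exact hnd i ⟨hi, mem_of_isRightDescent hinj hwC hdesc⟩ hdesc

end FinalElements

theorem final_inter_parahoric (g_pos : 2 ≤ g) (c : ℕ) (hc : 2 * c ≤ g)
    {W : Type*} [Group W] {M : CoxeterMatrix (Fin (g + 1))}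
    (hM : ∀ i j : Fin (g + 1), M.M i j =
      if i = j then 1
      else if (i : ℕ) + 1 = (j : ℕ) ∨ (j : ℕ) + 1 = (i : ℕ) then
        (if min (i : ℕ) (j : ℕ) = 0 ∨ max (i : ℕ) (j : ℕ) = g then 4 else 3)
      else 2)
    (cs : CoxeterSystem M W) :
    finalIn cs (genBy cs {i | 1 ≤ i}) (genBy cs {i | 1 ≤ i ∧ i ≤ g - 1}) ∩
        (genBy cs {i | i ≠ c ∧ i ≠ g - c} : Set W) =
      finalIn cs (genBy cs {i | g - c + 1 ≤ i}) (genBy cs {i | g - c + 1 ≤ i ∧ i ≤ g - 1}) := by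
  simp only [genBy_eq_parabolic, Set.mem_ofPred_eq]
  -- `W_{{c,g-c}} ∩ W_g` is generated by the two commuting families indexed by
  -- `[1, g-c-1] \ {c}` and `[g-c+1, g]`
  refine finalIn_inter_parabolic_eq_finalIn (cs.injective_simple_of_isAffineTypeC g_pos hM)
    (A := {i | 1 ≤ (i : ℕ) ∧ (i : ℕ) + c + 1 ≤ g ∧ (i : ℕ) ≠ c}) (fun i hi => ?_)
    (fun i hi => ?_) (fun i hi => ?_) (fun i hi => ?_) (Set.ext fun i => ?_)
    (fun i ⟨_, hi, _⟩ j (hj : g - c + 1 ≤ (j : ℕ)) =>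
      cs.commute_simple_of_isAffineTypeC hM (by omega))
    (Set.disjoint_left.mpr fun i hi hj => ?_)
  all_goals simp only [Set.mem_inter_iff, Set.mem_union, Set.mem_ofPred_eq] at *; omega
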